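/- Let α,q : ℝ → ℝ≥0 with q a probability density, α measurable with 0 < ∫α < ∞ and α ≪ q. Let φ : ℝ → ℝ be bounded measurable. If (X_l)_{l≥1} are i.i.d. with density q and W_l = α(X_l)/q(X_l), then (∑_{l=1}^M W_l φ(X_l))/(∑_{l=1}^M W_l) converges in probability as M → ∞ to π(φ) := ∫α(x)φ(x)dx / ∫α(x)dx. -/

import Mathlib

/-!
Reweighting by `α / q` turns integrals against the proposal law `q(x) dx` into integrals
against `α(x) dx`, wherever `α ≪ q`. Hence, by the strong law of large numbers applied to the
i.i.d. sequences `W_l φ(X_l)` and `W_l`, the averages `(1/M) ∑ W_l φ(X_l)` and `(1/M) ∑ W_l`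
converge almost surely to `∫ αφ` and `∫ α > 0`. Their quotient, the self-normalized estimator,
then converges almost surely, hence in probability, to `∫ αφ / ∫ α`.
-/

open MeasureTheory ProbabilityTheory Filter Topology

section WithDensityOfReal

variable {E : Type*} [MeasurableSpace E] {μ : Measure E} {q : E → ℝ}

lemma isProbabilityMeasure_withDensity_ofReal (hq : 0 ≤ᵐ[μ] q) (hq_one : ∫ x, q x ∂μ = 1) :
    IsProbabilityMeasure (μ.withDensity fun x => ENNReal.ofReal (q x)) := by
  have hq_int : Integrable q μ := by
    by_contra h
    simp [integral_undef h] at hq_one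
  constructor
  rw [withDensity_apply _ MeasurableSet.univ, Measure.restrict_univ,
    ← ofReal_integral_eq_lintegral_ofReal hq_int hq, hq_one, ENNReal.ofReal_one]

lemma integral_withDensity_ofReal (hq_meas : Measurable q) (hq : 0 ≤ᵐ[μ] q) (g : E → ℝ) :
    ∫ x, g x ∂μ.withDensity (fun x => ENNReal.ofReal (q x)) = ∫ x, q x * g x ∂μ := by
  rw [integral_withDensity_eq_integral_toReal_smul hq_meas.ennreal_ofReal
    (ae_of_all _ fun _ => ENNReal.ofReal_lt_top)]
  refine integral_congr_ae ?_
  filter_upwards [hq] with x hx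
  rw [ENNReal.toReal_ofReal hx, smul_eq_mul]

lemma integrable_withDensity_ofReal_iff (hq_meas : Measurable q) (hq : 0 ≤ᵐ[μ] q) {g : E → ℝ} :
    Integrable g (μ.withDensity fun x => ENNReal.ofReal (q x)) ↔
      Integrable (fun x => q x * g x) μ := by
  rw [integrable_withDensity_iff_integrable_smul' hq_meas.ennreal_ofReal
    (ae_of_all _ fun _ => ENNReal.ofReal_lt_top)]
  refine integrable_congr ?_
  filter_upwards [hq] with x hx
  rw [ENNReal.toReal_ofReal hx, smul_eq_mul]

variable {α : E → ℝ}

lemma integral_withDensity_ofReal_importanceWeight (hq_meas : Measurable q) (hq : 0 ≤ᵐ[μ] q)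
    (habs : ∀ x, q x = 0 → α x = 0) (g : E → ℝ) :
    ∫ x, α x / q x * g x ∂μ.withDensity (fun x => ENNReal.ofReal (q x)) =
      ∫ x, α x * g x ∂μ := by
  simp_rw [integral_withDensity_ofReal hq_meas hq, ← mul_assoc,
    mul_div_cancel_of_imp' (habs _)]

lemma integrable_withDensity_ofReal_importanceWeight_iff (hq_meas : Measurable q)
    (hq : 0 ≤ᵐ[μ] q) (habs : ∀ x, q x = 0 → α x = 0) {g : E → ℝ} :
    Integrable (fun x => α x / q x * g x) (μ.withDensity fun x => ENNReal.ofReal (q x)) ↔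
      Integrable (fun x => α x * g x) μ := by
  simp_rw [integrable_withDensity_ofReal_iff hq_meas hq, ← mul_assoc,
    mul_div_cancel_of_imp' (habs _)]

lemma integral_withDensity_ofReal_div (hq_meas : Measurable q) (hq : 0 ≤ᵐ[μ] q)
    (habs : ∀ x, q x = 0 → α x = 0) :
    ∫ x, α x / q x ∂μ.withDensity (fun x => ENNReal.ofReal (q x)) = ∫ x, α x ∂μ := by
  simpa using integral_withDensity_ofReal_importanceWeight hq_meas hq habs 1

lemma integrable_withDensity_ofReal_div_iff (hq_meas : Measurable q) (hq : 0 ≤ᵐ[μ] q)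
    (habs : ∀ x, q x = 0 → α x = 0) :
    Integrable (fun x => α x / q x) (μ.withDensity fun x => ENNReal.ofReal (q x)) ↔
      Integrable α μ := by
  simpa using integrable_withDensity_ofReal_importanceWeight_iff hq_meas hq habs (g := 1)

end WithDensityOfReal

lemma tendsto_div_of_tendsto_div_natCast {a b : ℕ → ℝ} {A B : ℝ}
    (ha : Tendsto (fun n => a n / n) atTop (𝓝 A)) (hb : Tendsto (fun n => b n / n) atTop (𝓝 B))
    (hB : B ≠ 0) : Tendsto (fun n => a n / b n) atTop (𝓝 (A / B)) := by
  refine (ha.div hb hB).congr' ?_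
  filter_upwards [eventually_ne_atTop 0] with n hn
  exact div_div_div_cancel_right₀ (Nat.cast_ne_zero.mpr hn) _ _

section StrongLaw

variable {Ω E : Type*} [MeasurableSpace Ω] [MeasurableSpace E] {μ : Measure Ω} {ν : Measure E}
  [NeZero ν] {X : ℕ → Ω → E}

lemma aemeasurable_of_map_eq {Y : Ω → E} (hY : μ.map Y = ν) : AEMeasurable Y μ :=
  .of_map_ne_zero (hY ▸ NeZero.ne ν)

theorem strong_law_ae_comp (hindep : Pairwise fun i j => IndepFun (X i) (X j) μ)
    (hlaw : ∀ i, μ.map (X i) = ν) {f : E → ℝ} (hf_meas : Measurable f) (hf_int : Integrable f ν) :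
    ∀ᵐ ω ∂μ, Tendsto (fun n : ℕ => (∑ i ∈ Finset.range n, f (X i ω)) / n) atTop
      (𝓝 (∫ x, f x ∂ν)) := by
  have hX : ∀ i, AEMeasurable (X i) μ := fun i => aemeasurable_of_map_eq (hlaw i)
  have hident : ∀ i, IdentDistrib (X i) (X 0) μ μ := fun i =>
    ⟨hX i, hX 0, by rw [hlaw i, hlaw 0]⟩
  have hint : Integrable (f ∘ X 0) μ := by
    rw [← integrable_map_measure hf_meas.aestronglyMeasurable (hX 0), hlaw 0]
    exact hf_int
  have hmean : ∫ x, f x ∂ν = ∫ ω, f (X 0 ω) ∂μ := by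
    rw [← hlaw 0, integral_map (hX 0) hf_meas.aestronglyMeasurable]
  rw [hmean]
  exact strong_law_ae_real (fun i => f ∘ X i) hint
    (fun i j hij => (hindep hij).comp hf_meas hf_meas) (fun i => (hident i).comp hf_meas)

theorem tendstoInMeasure_div_sum_comp [IsFiniteMeasure μ]
    (hindep : Pairwise fun i j => IndepFun (X i) (X j) μ) (hlaw : ∀ i, μ.map (X i) = ν)
    {f g : E → ℝ} (hf_meas : Measurable f) (hg_meas : Measurable g) (hf_int : Integrable f ν)
    (hg_int : Integrable g ν) (hg_ne : ∫ x, g x ∂ν ≠ 0) :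
    TendstoInMeasure μ
      (fun n ω => (∑ i ∈ Finset.range n, f (X i ω)) / ∑ i ∈ Finset.range n, g (X i ω))
      atTop (fun _ => (∫ x, f x ∂ν) / ∫ x, g x ∂ν) := by
  have hX : ∀ i, AEMeasurable (X i) μ := fun i => aemeasurable_of_map_eq (hlaw i)
  refine tendstoInMeasure_of_tendsto_ae (fun n => ?_) ?_
  · exact (Finset.aemeasurable_fun_sum _ fun i _ => hf_meas.comp_aemeasurable (hX i)).div
      (Finset.aemeasurable_fun_sum _ fun i _ => hg_meas.comp_aemeasurable (hX i))
      |>.aestronglyMeasurable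
  · filter_upwards [strong_law_ae_comp hindep hlaw hf_meas hf_int,
      strong_law_ae_comp hindep hlaw hg_meas hg_int] with ω hf_lim hg_lim
    exact tendsto_div_of_tendsto_div_natCast hf_lim hg_lim hg_ne

end StrongLaw

theorem stmt13_general {Ω : Type*} [MeasurableSpace Ω] (μ : Measure Ω) [IsProbabilityMeasure μ]
    (α q : ℝ → ℝ) (hq : ∀ x, 0 ≤ q x)
    (hαmeas : Measurable α) (hqmeas : Measurable q)
    (hqpdf : ∫ x, q x = 1) (hαint : Integrable α) (hαpos : 0 < ∫ x, α x)
    (habs : ∀ x, q x = 0 → α x = 0)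
    (φ : ℝ → ℝ) (hφmeas : Measurable φ) (C : ℝ) (hφbdd : ∀ x, |φ x| ≤ C)
    (X : ℕ → Ω → ℝ)
    (hindep : iIndepFun X μ)
    (hlaw : ∀ l, Measure.map (X l) μ
      = MeasureTheory.volume.withDensity (fun x => ENNReal.ofReal (q x))) :
    TendstoInMeasure μ
      (fun M ω => (∑ l ∈ Finset.range M, (α (X l ω) / q (X l ω)) * φ (X l ω))
        / (∑ l ∈ Finset.range M, α (X l ω) / q (X l ω)))
      atTop
      (fun _ => (∫ x, α x * φ x) / ∫ x, α x) := by
  have hq_ae : 0 ≤ᵐ[volume] q := ae_of_all _ hq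
  have := isProbabilityMeasure_withDensity_ofReal hq_ae hqpdf
  have hαφint : Integrable (fun x => α x * φ x) :=
    hαint.mul_bdd hφmeas.aestronglyMeasurable
      (ae_of_all _ fun x => (Real.norm_eq_abs _).trans_le (hφbdd x))
  have hw_meas : Measurable fun x => α x / q x := hαmeas.div hqmeas
  have hlim := tendstoInMeasure_div_sum_comp (fun i j hij => hindep.indepFun hij) hlaw
    (f := fun x => α x / q x * φ x) (hw_meas.mul hφmeas) hw_meas
    ((integrable_withDensity_ofReal_importanceWeight_iff hqmeas hq_ae habs).2 hαφint)
    ((integrable_withDensity_ofReal_div_iff hqmeas hq_ae habs).2 hαint)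
    (by rw [integral_withDensity_ofReal_div hqmeas hq_ae habs]; exact hαpos.ne')
  rwa [integral_withDensity_ofReal_importanceWeight hqmeas hq_ae habs,
    integral_withDensity_ofReal_div hqmeas hq_ae habs] at hlim

/-- Consistency of the self-normalized importance sampling estimator: with `X_l` i.i.d.
from the proposal density `q`, weights `W_l = α(X_l)/q(X_l)` and bounded measurable `φ`,
`(∑_{l<M} W_l φ(X_l)) / (∑_{l<M} W_l) → π(φ) = ∫αφ/∫α` in probability as `M → ∞`. -/
theorem stmt13 {Ω : Type*} [MeasurableSpace Ω] (μ : Measure Ω) [IsProbabilityMeasure μ]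
    (α q : ℝ → ℝ) (hα : ∀ x, 0 ≤ α x) (hq : ∀ x, 0 ≤ q x)
    (hαmeas : Measurable α) (hqmeas : Measurable q)
    (hqpdf : ∫ x, q x = 1) (hαint : Integrable α) (hαpos : 0 < ∫ x, α x)
    (habs : ∀ x, q x = 0 → α x = 0)
    (φ : ℝ → ℝ) (hφmeas : Measurable φ) (C : ℝ) (hφbdd : ∀ x, |φ x| ≤ C)
    (X : ℕ → Ω → ℝ)
    (hindep : iIndepFun X μ)
    (hlaw : ∀ l, Measure.map (X l) μ
      = MeasureTheory.volume.withDensity (fun x => ENNReal.ofReal (q x))) :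
    TendstoInMeasure μ
      (fun M ω => (∑ l ∈ Finset.range M, (α (X l ω) / q (X l ω)) * φ (X l ω))
        / (∑ l ∈ Finset.range M, α (X l ω) / q (X l ω)))
      atTop
      (fun _ => (∫ x, α x * φ x) / ∫ x, α x) :=
  stmt13_general μ α q hq hαmeas hqmeas hqpdf hαint hαpos habs φ hφmeas C hφbdd X hindep hlaw
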